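/- arXiv:1506.02896 — 2 statements merged into one kernel-verified Lean document; each statement's English description precedes it below -/
import Mathlib

section
/- Let s, u ∈ ℂ with s ≠ 0, let A = [[s, 1], [0, s⁻¹]], B = [[s, 0], [−u, s⁻¹]] in SL₂(ℂ), W = B·A⁻¹·B⁻¹·A, W' = A·B⁻¹·A⁻¹·B, z = 2 + (2 − s² − s⁻²)u + u², and let n be an integer. If the Riley condition S_n(z) = (u² − (u+1)(s² + s⁻² − 3))·S_{n−1}(z) holds, then trace((W')^n · W^n) − 2 = u²·(s² + s⁻² + 2) / ((u+1)(s² + s⁻² − 2) − u²), and in particular the denominator (u+1)(s² + s⁻² − 2) − u² is nonzero. -/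
/-!
A matrix `M` with `det M = 1` and `trace M = z` satisfies `M² = z M - 1` (Cayley–Hamilton), so
`M ^ n = S_{n-1}(z) M - S_{n-2}(z)` for every integer `n`. The commutators `W` and `W'` both have
trace `z`, hence `trace (W'ⁿ Wⁿ)` is a quadratic form in `S_{n-1}(z)`, `S_{n-2}(z)` whose only
other ingredient is `trace (W' W)`. The Riley condition together with the recurrence gives
`S_{n-2} = (x - 1 - u) S_{n-1}` with `x = s² + s⁻²`, and the Chebyshev identity
`S_{n-2}² + S_{n-1}² - z S_{n-2} S_{n-1} = 1` then reads
`S_{n-1}² · ((u+1)(x-2) - u²) · (x - u - 2) = 1`. This forces the denominator to be nonzero and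
turns the quadratic form into the stated rational function.
-/

open Matrix Polynomial

theorem Polynomial.Chebyshev.eq_eval_S_of_recurrence {R : Type*} [CommRing R] {z : R}
    {S : ℤ → R} (hS0 : S 0 = 1) (hS1 : S 1 = z)
    (hSrec : ∀ k : ℤ, S k = z * S (k - 1) - S (k - 2)) (k : ℤ) :
    S k = (Chebyshev.S R k).eval z := by
  induction k using Polynomial.Chebyshev.induct with
  | zero => simp [hS0]
  | one => simp [hS1]
  | add_two n ih₁ ih₀ =>
    have h := hSrec (n + 2)
    rw [show (n : ℤ) + 2 - 1 = n + 1 by ring, add_sub_cancel_right] at h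
    simp [h, ih₁, ih₀]
  | neg_add_one n ih₀ ih₁ =>
    have h := hSrec (-n + 1)
    rw [show -(n : ℤ) + 1 - 1 = -n by ring, show -(n : ℤ) + 1 - 2 = -n - 1 by ring] at h
    simp only [Chebyshev.S_sub_one, eval_sub, eval_mul, eval_X, ← ih₁, ← ih₀]
    linear_combination h

theorem Polynomial.Chebyshev.sq_add_sq_sub_mul_of_recurrence {R : Type*} [CommRing R] {z : R}
    {S : ℤ → R} (hS0 : S 0 = 1) (hS1 : S 1 = z)
    (hSrec : ∀ k : ℤ, S k = z * S (k - 1) - S (k - 2)) (k : ℤ) :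
    S k ^ 2 + S (k + 1) ^ 2 - z * S k * S (k + 1) = 1 := by
  simpa [eq_eval_S_of_recurrence hS0 hS1 hSrec] using congrArg (eval z) (S_sq_add_S_sq R k)

theorem Matrix.mul_self_fin_two {R : Type*} [CommRing R] (M : Matrix (Fin 2) (Fin 2) R) :
    M * M = M.trace • M - M.det • 1 := by
  ext i j
  fin_cases i <;> fin_cases j <;> simp [mul_apply, trace_fin_two, det_fin_two] <;> ring

theorem Matrix.zpow_eq_eval_chebyshev_S {n R : Type*} [Fintype n] [DecidableEq n] [CommRing R]
    {M : Matrix n n R} {z : R} (hM : M * M = z • M - 1) (m : ℤ) :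
    M ^ m = (Chebyshev.S R (m - 1)).eval z • M - (Chebyshev.S R (m - 2)).eval z • 1 := by
  have hinv : M * (z • 1 - M) = 1 := by
    rw [mul_sub, mul_smul_comm, mul_one, hM, sub_sub_cancel]
  have hdet : IsUnit M.det := isUnit_det_of_right_inverse hinv
  induction m using Int.induction_on with
  | zero => simp
  | succ k ih =>
    have h := Chebyshev.S_add_one R (k - 1)
    rw [sub_add_cancel, sub_sub, show (1 : ℤ) + 1 = 2 by norm_num] at h
    rw [zpow_add_one hdet, ih, add_sub_cancel_right, show (k : ℤ) + 1 - 2 = k - 1 by ring, h,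
      sub_mul, smul_mul_assoc, smul_mul_assoc, one_mul, hM]
    simp only [eval_sub, eval_mul, eval_X]
    module
  | pred k ih =>
    have h := Chebyshev.S_sub_one R (-k - 2)
    rw [show -(k : ℤ) - 2 - 1 = -k - 3 by ring, show -(k : ℤ) - 2 + 1 = -k - 1 by ring] at h
    rw [zpow_sub_one hdet, ih, inv_eq_right_inv hinv, show -(k : ℤ) - 1 - 1 = -k - 2 by ring,
      show -(k : ℤ) - 1 - 2 = -k - 3 by ring, h, sub_mul, smul_mul_assoc, smul_mul_assoc, one_mul,
      mul_sub, mul_smul_comm, mul_one, hM]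
    simp only [eval_sub, eval_mul, eval_X]
    module

theorem Matrix.trace_zpow_mul_zpow_fin_two {R : Type*} [CommRing R]
    {P Q : Matrix (Fin 2) (Fin 2) R} {z : R} (hPdet : P.det = 1) (hPtr : P.trace = z)
    (hQdet : Q.det = 1) (hQtr : Q.trace = z) (m : ℤ) :
    (P ^ m * Q ^ m).trace =
      (Chebyshev.S R (m - 1)).eval z ^ 2 * (P * Q).trace
        - 2 * z * (Chebyshev.S R (m - 1)).eval z * (Chebyshev.S R (m - 2)).eval z
        + 2 * (Chebyshev.S R (m - 2)).eval z ^ 2 := by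
  have hP := P.mul_self_fin_two
  have hQ := Q.mul_self_fin_two
  rw [hPdet, hPtr, one_smul] at hP
  rw [hQdet, hQtr, one_smul] at hQ
  rw [zpow_eq_eval_chebyshev_S hP, zpow_eq_eval_chebyshev_S hQ]
  simp only [sub_mul, mul_sub, smul_mul_assoc, mul_smul_comm, one_mul, mul_one, trace_sub,
    trace_smul, smul_eq_mul, trace_one, Fintype.card_fin, Nat.cast_ofNat, hPtr, hQtr]
  ring

theorem Matrix.det_commutator_eq_one {n R : Type*} [Fintype n] [DecidableEq n] [CommRing R]
    {A B : Matrix n n R} (hA : IsUnit A.det) (hB : IsUnit B.det) :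
    (B * A⁻¹ * B⁻¹ * A).det = 1 := by
  simp only [det_mul]
  linear_combination (B⁻¹.det * B.det) * det_nonsing_inv_mul_det A hA
    + det_nonsing_inv_mul_det B hB

theorem Matrix.inv_fin_two_of_det_eq_one {R : Type*} [CommRing R] {a b c d : R}
    (h : a * d - b * c = 1) : !![a, b; c, d]⁻¹ = !![d, -b; -c, a] := by
  rw [inv_def, det_fin_two_of, h, Ring.inverse_one, one_smul, adjugate_fin_two_of]

section RileyRepresentation

variable {K : Type*} [Field K]

def rileyA (s : K) : Matrix (Fin 2) (Fin 2) K := !![s, 1; 0, s⁻¹]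

def rileyB (s u : K) : Matrix (Fin 2) (Fin 2) K := !![s, 0; -u, s⁻¹]

noncomputable def rileyW (s u : K) : Matrix (Fin 2) (Fin 2) K :=
  rileyB s u * (rileyA s)⁻¹ * (rileyB s u)⁻¹ * rileyA s

noncomputable def rileyW' (s u : K) : Matrix (Fin 2) (Fin 2) K :=
  rileyA s * (rileyB s u)⁻¹ * (rileyA s)⁻¹ * rileyB s u

variable {s : K}

theorem det_rileyA (hs : s ≠ 0) : (rileyA s).det = 1 := by
  rw [rileyA, det_fin_two_of, mul_inv_cancel₀ hs, mul_zero, sub_zero]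

theorem det_rileyB (hs : s ≠ 0) (u : K) : (rileyB s u).det = 1 := by
  rw [rileyB, det_fin_two_of, mul_inv_cancel₀ hs, zero_mul, sub_zero]

theorem rileyA_inv (hs : s ≠ 0) : (rileyA s)⁻¹ = !![s⁻¹, -1; 0, s] := by
  rw [rileyA, inv_fin_two_of_det_eq_one (det_fin_two_of s 1 0 s⁻¹ ▸ det_rileyA hs), neg_zero]

theorem rileyB_inv (hs : s ≠ 0) (u : K) : (rileyB s u)⁻¹ = !![s⁻¹, 0; u, s] := by
  rw [rileyB, inv_fin_two_of_det_eq_one (det_fin_two_of s 0 (-u) s⁻¹ ▸ det_rileyB hs u),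
    neg_zero, neg_neg]

theorem rileyW_eq (hs : s ≠ 0) (u : K) :
    rileyW s u =
      !![1 - s ^ 2 * u, s⁻¹ - s * u - s;
        -(s⁻¹ * u) + s * u ^ 2 + s * u, -(s⁻¹ ^ 2 * u) + u ^ 2 + 2 * u + 1] := by
  rw [rileyW, rileyA_inv hs, rileyB_inv hs, rileyA, rileyB]
  simp only [mul_fin_two, EmbeddingLike.apply_eq_iff_eq, vecCons_inj, and_true]
  refine ⟨⟨?_, ?_⟩, ?_, ?_⟩ <;> field_simp <;> ring

theorem rileyW'_eq (hs : s ≠ 0) (u : K) :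
    rileyW' s u =
      !![1 + 2 * u + u ^ 2 - s ^ 2 * u, -s⁻¹ - s⁻¹ * u + s;
        s⁻¹ * u + s⁻¹ * u ^ 2 - s * u, -(s⁻¹ ^ 2 * u) + 1] := by
  rw [rileyW', rileyA_inv hs, rileyB_inv hs, rileyA, rileyB]
  simp only [mul_fin_two, EmbeddingLike.apply_eq_iff_eq, vecCons_inj, and_true]
  refine ⟨⟨?_, ?_⟩, ?_, ?_⟩ <;> field_simp <;> ring

theorem det_rileyW (hs : s ≠ 0) (u : K) : (rileyW s u).det = 1 := by
  rw [rileyW, det_commutator_eq_one] <;> simp [det_rileyA, det_rileyB, hs]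

theorem det_rileyW' (hs : s ≠ 0) (u : K) : (rileyW' s u).det = 1 := by
  rw [rileyW', det_commutator_eq_one] <;> simp [det_rileyA, det_rileyB, hs]

theorem trace_rileyW (hs : s ≠ 0) (u : K) :
    (rileyW s u).trace = 2 + (2 - s ^ 2 - s⁻¹ ^ 2) * u + u ^ 2 := by
  rw [rileyW_eq hs, trace_fin_two_of]
  ring

theorem trace_rileyW' (hs : s ≠ 0) (u : K) :
    (rileyW' s u).trace = 2 + (2 - s ^ 2 - s⁻¹ ^ 2) * u + u ^ 2 := by
  rw [rileyW'_eq hs, trace_fin_two_of]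
  ring

theorem trace_rileyW'_mul_rileyW (hs : s ≠ 0) (u : K) :
    (rileyW' s u * rileyW s u).trace =
      2 + u ^ 2 * (s ^ 2 + s⁻¹ ^ 2 + 2) * (s ^ 2 + s⁻¹ ^ 2 - u - 2) := by
  rw [rileyW_eq hs, rileyW'_eq hs, mul_fin_two, trace_fin_two_of]
  field_simp
  ring

end RileyRepresentation

theorem riley_longitude_trace_identity {K : Type*} [Field K] {x u z a b c : K}
    (hz : z = 2 + (2 - x) * u + u ^ 2) (hrec : c = z * a - b)
    (hRiley : c = (u ^ 2 - (u + 1) * (x - 3)) * a) (hdet : b ^ 2 + a ^ 2 - z * b * a = 1) :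
    (u + 1) * (x - 2) - u ^ 2 ≠ 0 ∧
      a ^ 2 * (2 + u ^ 2 * (x + 2) * (x - u - 2)) - 2 * z * a * b + 2 * b ^ 2 - 2 =
        u ^ 2 * (x + 2) / ((u + 1) * (x - 2) - u ^ 2) := by
  have hb : b = (x - 1 - u) * a := by linear_combination hrec - hRiley + a * hz
  subst hb
  have hdet' : a ^ 2 * ((u + 1) * (x - 2) - u ^ 2) * (x - u - 2) = 1 := by
    linear_combination hdet + (x - 1 - u) * a ^ 2 * hz
  have hD : (u + 1) * (x - 2) - u ^ 2 ≠ 0 := fun h => by simp [h] at hdet'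
  refine ⟨hD, ?_⟩
  rw [eq_div_iff hD]
  linear_combination (2 * ((u + 1) * (x - 2) - u ^ 2) + u ^ 2 * (x + 2)) * hdet'
    - 2 * (x - 1 - u) * a ^ 2 * ((u + 1) * (x - 2) - u ^ 2) * hz

/-- Let `s, u ∈ ℂ` with `s ≠ 0`, let `A = !![s, 1; 0, s⁻¹]`, `B = !![s, 0; -u, s⁻¹]`,
`W = B * A⁻¹ * B⁻¹ * A`, `W' = A * B⁻¹ * A⁻¹ * B`, `z = 2 + (2 - s² - s⁻²)u + u²`, and
let `n` be an integer. If the Riley condition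
`S n = (u² - (u+1)(s² + s⁻² - 3)) * S (n-1)` holds, then
`trace((W')^n * W^n) - 2 = u²(s² + s⁻² + 2) / ((u+1)(s² + s⁻² - 2) - u²)`, and in
particular the denominator `(u+1)(s² + s⁻² - 2) - u²` is nonzero. -/
theorem trace_longitude_formula (s u z : ℂ) (hs : s ≠ 0)
    (hz : z = 2 + (2 - s ^ 2 - s⁻¹ ^ 2) * u + u ^ 2)
    (S : ℤ → ℂ) (hS0 : S 0 = 1) (hS1 : S 1 = z)
    (hSrec : ∀ k : ℤ, S k = z * S (k - 1) - S (k - 2))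
    (A B W W' : Matrix (Fin 2) (Fin 2) ℂ)
    (hA : A = !![s, 1; 0, s⁻¹]) (hB : B = !![s, 0; -u, s⁻¹])
    (hW : W = B * A⁻¹ * B⁻¹ * A) (hW' : W' = A * B⁻¹ * A⁻¹ * B)
    (n : ℤ)
    (hRiley : S n = (u ^ 2 - (u + 1) * (s ^ 2 + s⁻¹ ^ 2 - 3)) * S (n - 1)) :
    (u + 1) * (s ^ 2 + s⁻¹ ^ 2 - 2) - u ^ 2 ≠ 0 ∧
    (W' ^ n * W ^ n).trace - 2 =
      u ^ 2 * (s ^ 2 + s⁻¹ ^ 2 + 2) /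
        ((u + 1) * (s ^ 2 + s⁻¹ ^ 2 - 2) - u ^ 2) := by
  obtain rfl : W = rileyW s u := by rw [hW, hA, hB]; rfl
  obtain rfl : W' = rileyW' s u := by rw [hW', hA, hB]; rfl
  have hSeval := Chebyshev.eq_eval_S_of_recurrence hS0 hS1 hSrec
  have hdet := Chebyshev.sq_add_sq_sub_mul_of_recurrence hS0 hS1 hSrec (n - 2)
  rw [show n - 2 + 1 = n - 1 by ring] at hdet
  rw [trace_zpow_mul_zpow_fin_two (det_rileyW' hs u) ((trace_rileyW' hs u).trans hz.symm)
    (det_rileyW hs u) ((trace_rileyW hs u).trans hz.symm), trace_rileyW'_mul_rileyW hs]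
  simp only [← hSeval]
  exact riley_longitude_trace_identity (by rw [hz]; ring) (hSrec n) hRiley hdet
end

section
/- Let s, u ∈ ℂ with s ≠ 0, let A = [[s, 1], [0, s⁻¹]], B = [[s, 0], [−u, s⁻¹]] in SL₂(ℂ), W = B·A⁻¹·B⁻¹·A, x = s + s⁻¹, and z = 2 + (2 − s² − s⁻²)u + u². Let n ≥ 1 be a natural number, and set Δ = ∑_{i=0}^{n−1} W^{−i} and Ω = A⁻¹·(I − B)·(I − A)·Δ. If the Riley condition S_n(z) = (u² − (u+1)(s² + s⁻² − 3))·S_{n−1}(z) holds, then trace(Ω) = x·(2 − x)·S_{n−1}(z) − 1. -/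
/-!
`W⁻¹ = A⁻¹ B A B⁻¹` has determinant `1` and trace `z`, so by Cayley–Hamilton `W⁻² = z W⁻¹ - 1`
and hence `W⁻ⁱ = S_{i-1}(z) W⁻¹ - S_{i-2}(z)`. With `C = A⁻¹ (1 - B) (1 - A)` this makes
`trace Ω` a linear combination of the `S_k(z)` with coefficients `trace (C W⁻¹)` and `trace C`.
These satisfy `trace (C W⁻¹) = trace C * (z - 1) + (z - 2)`, which is exactly what makes the
sum over `i < n` telescope, to `(trace C - z + 1) S_{n-1}(z) + S_n(z) - 1`; the Riley condition
then turns `S_n(z)` into a multiple of `S_{n-1}(z)`.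
-/

open Matrix Polynomial Polynomial.Chebyshev

namespace Matrix

variable {R : Type*} [CommRing R]

theorem inv_fin_two_of_det_eq_one_s13 {a b c d : R} (h : a * d - b * c = 1) :
    !![a, b; c, d]⁻¹ = !![d, -b; -c, a] := by
  simp [inv_def, adjugate_fin_two_of, det_fin_two_of, h]

theorem mul_self_fin_two_s13 (M : Matrix (Fin 2) (Fin 2) R) :
    M * M = M.trace • M - M.det • 1 := by
  ext i j
  fin_cases i <;> fin_cases j <;>
    simp [mul_apply, trace_fin_two, det_fin_two] <;> ring

theorem commutator_inv {n : Type*} [Fintype n] [DecidableEq n] {A B : Matrix n n R}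
    (hA : IsUnit A.det) (hB : IsUnit B.det) :
    (B * A⁻¹ * B⁻¹ * A)⁻¹ = A⁻¹ * B * A * B⁻¹ := by
  simp only [mul_inv_rev, nonsing_inv_nonsing_inv _ hA, nonsing_inv_nonsing_inv _ hB, mul_assoc]

end Matrix

namespace Polynomial.Chebyshev

variable {R : Type*} [CommRing R] {z : R}

theorem eq_eval_S {f : ℤ → R} (h0 : f 0 = 1) (h1 : f 1 = z)
    (hrec : ∀ k, f k = z * f (k - 1) - f (k - 2)) : f = fun k ↦ (S R k).eval z := by
  funext k
  induction k using Chebyshev.induct with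
  | zero => simp [h0]
  | one => simp [h1]
  | add_two n ih1 ih0 =>
    rw [hrec, S_add_two, eval_sub, eval_mul, eval_X, ← ih1, ← ih0]
    ring_nf
  | neg_add_one n ih0 ih1 =>
    have h := hrec (-n + 1)
    rw [S_sub_one, eval_sub, eval_mul, eval_X, ← ih0, ← ih1]
    ring_nf at h ⊢
    linear_combination h

theorem pow_eq_eval_S_smul_sub {A : Type*} [Ring A] [Algebra R A] {m : A}
    (hm : m * m = z • m - 1) (n : ℕ) :
    m ^ n = (S R (n - 1)).eval z • m - (S R (n - 2)).eval z • (1 : A) := by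
  induction n with
  | zero => simp [S_neg_one, S_neg_two]
  | succ n ih =>
    have hS := congrArg (eval z) (S_eq R (n : ℤ))
    simp only [eval_sub, eval_mul, eval_X] at hS
    rw [pow_succ, ih, sub_mul, smul_mul_assoc, hm, smul_mul_assoc, one_mul]
    push_cast
    rw [add_sub_cancel_right, show (n : ℤ) + 1 - 2 = n - 1 by ring, hS]
    module

theorem trace_mul_pow_eq_eval_S {n : Type*} [Fintype n] [DecidableEq n] {M : Matrix n n R}
    (hM : M * M = z • M - 1) (C : Matrix n n R) (k : ℕ) :
    trace (C * M ^ k) = (S R (k - 1)).eval z * trace (C * M) - (S R (k - 2)).eval z * trace C := by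
  rw [pow_eq_eval_S_smul_sub hM, mul_sub, Matrix.mul_smul, Matrix.mul_smul, mul_one, trace_sub,
    trace_smul, trace_smul, smul_eq_mul, smul_eq_mul]

theorem sum_range_eval_S_telescope {a b c : R} (h : a = b * (z - 1) + c * (z - 2)) (m : ℕ) :
    ∑ i ∈ Finset.range m, ((S R (i - 1)).eval z * a - (S R (i - 2)).eval z * b) =
      (b - c * (z - 1)) * (S R (m - 1)).eval z + c * ((S R m).eval z - 1) := by
  induction m with
  | zero => simp [S_neg_one]
  | succ m ih =>
    have hS := congrArg (eval z) (S_add_one R (m : ℤ))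
    have hS' := congrArg (eval z) (S_sub_two R (m : ℤ))
    simp only [eval_sub, eval_mul, eval_X] at hS hS'
    rw [Finset.sum_range_succ, ih]
    push_cast
    rw [add_sub_cancel_right, hS, hS', h]
    ring

end Polynomial.Chebyshev

section RileyRepresentation

variable {K : Type*} [Field K] {s x z : K} (u : K)

local notation "𝐀" => !![s, 1; 0, s⁻¹]
local notation "𝐁" => !![s, 0; -u, s⁻¹]
-- `𝐕 = W⁻¹` by `Matrix.commutator_inv`, and `Ω = 𝐂 * Δ`.
local notation "𝐕" => 𝐀⁻¹ * 𝐁 * 𝐀 * 𝐁⁻¹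
local notation "𝐂" => 𝐀⁻¹ * (1 - 𝐁) * (1 - 𝐀)

theorem riley_inv_A (hs : s ≠ 0) : 𝐀⁻¹ = !![s⁻¹, -1; 0, s] := by
  rw [inv_fin_two_of_det_eq_one_s13] <;> simp [hs]

theorem riley_inv_B (hs : s ≠ 0) : 𝐁⁻¹ = !![s⁻¹, 0; u, s] := by
  rw [inv_fin_two_of_det_eq_one_s13] <;> simp [hs]

theorem riley_V_mul_self (hs : s ≠ 0) (hz : z = 2 + (2 - s ^ 2 - s⁻¹ ^ 2) * u + u ^ 2) :
    𝐕 * 𝐕 = z • 𝐕 - 1 := by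
  have htrace : trace 𝐕 = z := by
    rw [riley_inv_A hs, riley_inv_B u hs, hz]
    simp [trace_fin_two_of]
    field_simp
    ring
  have hdet : det 𝐕 = 1 := by
    rw [riley_inv_A hs, riley_inv_B u hs]
    simp [det_fin_two_of]
    field_simp
    ring
  rw [mul_self_fin_two_s13, htrace, hdet, one_smul]

theorem riley_trace_C (hs : s ≠ 0) (hx : x = s + s⁻¹) : trace 𝐂 = 2 * x - 4 - u := by
  rw [riley_inv_A hs, one_fin_two, hx]
  simp [trace_fin_two_of]
  field_simp
  ring

theorem riley_trace_C_mul_V (hs : s ≠ 0) (hz : z = 2 + (2 - s ^ 2 - s⁻¹ ^ 2) * u + u ^ 2) :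
    trace (𝐂 * 𝐕) = trace 𝐂 * (z - 1) + (z - 2) := by
  rw [riley_inv_A hs, riley_inv_B u hs, one_fin_two, hz]
  simp [trace_fin_two_of]
  field_simp
  ring

end RileyRepresentation

theorem trace_Omega_twist_knot_general (s u x z : ℂ) (hs : s ≠ 0)
    (hx : x = s + s⁻¹) (hz : z = 2 + (2 - s ^ 2 - s⁻¹ ^ 2) * u + u ^ 2)
    (S : ℤ → ℂ) (hS0 : S 0 = 1) (hS1 : S 1 = z)
    (hSrec : ∀ k : ℤ, S k = z * S (k - 1) - S (k - 2))
    (A B W : Matrix (Fin 2) (Fin 2) ℂ)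
    (hA : A = !![s, 1; 0, s⁻¹]) (hB : B = !![s, 0; -u, s⁻¹])
    (hW : W = B * A⁻¹ * B⁻¹ * A)
    (n : ℕ)
    (Δ Ω : Matrix (Fin 2) (Fin 2) ℂ)
    (hΔ : Δ = ∑ i ∈ Finset.range n, W ^ (-(i : ℤ)))
    (hΩ : Ω = A⁻¹ * (1 - B) * (1 - A) * Δ)
    (hRiley : S (n : ℤ) = (u ^ 2 - (u + 1) * (s ^ 2 + s⁻¹ ^ 2 - 3)) * S ((n : ℤ) - 1)) :
    Ω.trace = x * (2 - x) * S ((n : ℤ) - 1) - 1 := by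
  obtain rfl := eq_eval_S hS0 hS1 hSrec
  beta_reduce at hRiley
  have hWinv : W⁻¹ = A⁻¹ * B * A * B⁻¹ :=
    hW ▸ commutator_inv (by simp [hA, hs]) (by simp [hB, hs])
  have hV := hA ▸ hB ▸ riley_V_mul_self u hs hz
  have htrC := hA ▸ hB ▸ riley_trace_C u hs hx
  have htrCV := hA ▸ hB ▸ riley_trace_C_mul_V u hs hz
  calc Ω.trace
      = ∑ i ∈ Finset.range n, ((S ℂ (i - 1)).eval z * trace (A⁻¹ * (1 - B) * (1 - A) * W⁻¹) -
          (S ℂ (i - 2)).eval z * trace (A⁻¹ * (1 - B) * (1 - A))) := by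
        rw [hΩ, hΔ, Finset.mul_sum, trace_sum]
        refine Finset.sum_congr rfl fun i _ ↦ ?_
        rw [zpow_neg_natCast, ← inv_pow', hWinv, trace_mul_pow_eq_eval_S hV]
    _ = (trace (A⁻¹ * (1 - B) * (1 - A)) - 1 * (z - 1)) * (S ℂ (n - 1)).eval z +
          1 * ((S ℂ n).eval z - 1) :=
        sum_range_eval_S_telescope (by rw [hWinv, htrCV, one_mul]) n
    _ = x * (2 - x) * (S ℂ (n - 1)).eval z - 1 := by
        rw [hRiley, htrC, hx, hz]
        field_simp
        ring

/-- Let `s, u ∈ ℂ` with `s ≠ 0`, let `A = !![s, 1; 0, s⁻¹]`, `B = !![s, 0; -u, s⁻¹]`,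
`W = B * A⁻¹ * B⁻¹ * A`, `x = s + s⁻¹`, `z = 2 + (2 - s² - s⁻²)u + u²`. Let `n ≥ 1` be a
natural number, and set `Δ = ∑_{i=0}^{n-1} W^(-i)` and `Ω = A⁻¹ * (1 - B) * (1 - A) * Δ`.
If the Riley condition `S n = (u² - (u+1)(s² + s⁻² - 3)) * S (n-1)` holds, then
`trace Ω = x * (2 - x) * S (n-1) - 1`. -/
theorem trace_Omega_twist_knot (s u x z : ℂ) (hs : s ≠ 0)
    (hx : x = s + s⁻¹) (hz : z = 2 + (2 - s ^ 2 - s⁻¹ ^ 2) * u + u ^ 2)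
    (S : ℤ → ℂ) (hS0 : S 0 = 1) (hS1 : S 1 = z)
    (hSrec : ∀ k : ℤ, S k = z * S (k - 1) - S (k - 2))
    (A B W : Matrix (Fin 2) (Fin 2) ℂ)
    (hA : A = !![s, 1; 0, s⁻¹]) (hB : B = !![s, 0; -u, s⁻¹])
    (hW : W = B * A⁻¹ * B⁻¹ * A)
    (n : ℕ) (hn : 1 ≤ n)
    (Δ Ω : Matrix (Fin 2) (Fin 2) ℂ)
    (hΔ : Δ = ∑ i ∈ Finset.range n, W ^ (-(i : ℤ)))
    (hΩ : Ω = A⁻¹ * (1 - B) * (1 - A) * Δ)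
    (hRiley : S (n : ℤ) = (u ^ 2 - (u + 1) * (s ^ 2 + s⁻¹ ^ 2 - 3)) * S ((n : ℤ) - 1)) :
    Ω.trace = x * (2 - x) * S ((n : ℤ) - 1) - 1 :=
  trace_Omega_twist_knot_general s u x z hs hx hz S hS0 hS1 hSrec A B W hA hB hW n Δ Ω hΔ hΩ hRiley
end
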